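/- arXiv:2509.03234 — 2 statements merged into one kernel-verified Lean document; each statement's English description precedes it below -/
import Mathlib

section
/- Let N ≥ 2 and 1 ≤ k < N, let I₁,…,I_N and R₁,…,R_N be positive integers, let 𝒢 ∈ ℝ^{R₁×⋯×R_N} be a core tensor, let A^(j) ∈ ℝ^{R_j×I_j} be factor matrices, and let d^(j) ∈ ℝ^{R_j} be vectors, for j = 1,…,N. Define the TeRA weight-update tensor Δ𝒲 ∈ ℝ^{I₁×⋯×I_N} by Δ𝒲(i₁,…,i_N) = ∑_{r₁=1}^{R₁}⋯∑_{r_N=1}^{R_N} 𝒢(r₁,…,r_N) · ∏_{j=1}^N d^(j)(r_j) · ∏_{j=1}^N A^(j)(r_j, i_j). Then the matrix rank of the [N;k]-unfolding Δ𝐖_{[N;k]} satisfies rank(Δ𝐖_{[N;k]}) ≤ min(∏_{i=1}^k R_i, ∏_{i=k+1}^N R_i). -/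
/-!
The TeRA update is the Tucker product of the core `𝒢 ⊙ (d⁽¹⁾ ∘ ⋯ ∘ d⁽ᴺ⁾)` with the factors
`A⁽ʲ⁾`. The `[N;k]`-unfolding of a Tucker product `⟦ℋ; A⁽¹⁾, …, A⁽ᴺ⁾⟧` factors as
`(A⁽¹⁾ ⊗ ⋯ ⊗ A⁽ᵏ⁾)ᵀ · ℋ_{[N;k]} · (A⁽ᵏ⁺¹⁾ ⊗ ⋯ ⊗ A⁽ᴺ⁾)`, so its rank is at most that of
`ℋ_{[N;k]}`, an `(∏_{i ≤ k} R_i) × (∏_{i > k} R_i)` matrix.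
-/

/-- An order-`N` real tensor with dimensions `I 0, …, I (N-1)`. -/
abbrev Tensor {N : ℕ} (I : Fin N → ℕ) : Type :=
  ((i : Fin N) → Fin (I i)) → ℝ

/-- Row index type of the `[N;k]`-unfolding: the product of the first `k` index sets. -/
abbrev Row (N k : ℕ) (I : Fin N → ℕ) : Type :=
  (i : {j : Fin N // j.1 < k}) → Fin (I i.1)

/-- Column index type of the `[N;k]`-unfolding: the product of the last `N - k` index sets. -/
abbrev Col (N k : ℕ) (I : Fin N → ℕ) : Type :=
  (i : {j : Fin N // ¬ j.1 < k}) → Fin (I i.1)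

/-- The `[N;k]`-unfolding of an order-`N` tensor. -/
def unfold {N : ℕ} (k : ℕ) {I : Fin N → ℕ} (A : Tensor I) :
    Matrix (Row N k I) (Col N k I) ℝ :=
  fun r c => A fun i => if h : i.1 < k then r ⟨i, h⟩ else c ⟨i, h⟩

section Tucker

variable {N : ℕ}

def tucker {R I : Fin N → ℕ} (H : Tensor R) (A : (j : Fin N) → Fin (R j) → Fin (I j) → ℝ) :
    Tensor I :=
  fun idx => ∑ r, H r * ∏ j, A j (r j) (idx j)

abbrev splitIndex (k : ℕ) (I : Fin N → ℕ) : ((j : Fin N) → Fin (I j)) ≃ Row N k I × Col N k I :=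
  Equiv.piEquivPiSubtypeProd (fun j : Fin N => j.1 < k) (fun j => Fin (I j))

theorem unfold_apply (k : ℕ) {I : Fin N → ℕ} (H : Tensor I) (x : Row N k I) (y : Col N k I) :
    unfold k H x y = H ((splitIndex k I).symm (x, y)) :=
  rfl

theorem prod_splitIndex_symm (k : ℕ) {R I : Fin N → ℕ}
    (A : (j : Fin N) → Fin (R j) → Fin (I j) → ℝ)
    (a : Row N k R) (b : Col N k R) (x : Row N k I) (y : Col N k I) :
    ∏ j, A j ((splitIndex k R).symm (a, b) j) ((splitIndex k I).symm (x, y) j) =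
      (∏ j : {j : Fin N // j.1 < k}, A j (a j) (x j)) *
        ∏ j : {j : Fin N // ¬ j.1 < k}, A j (b j) (y j) := by
  rw [← Fintype.prod_subtype_mul_prod_subtype (fun j : Fin N => j.1 < k)]
  congr 1 <;> refine Fintype.prod_congr _ _ fun j => ?_ <;> simp [j.2]

def rowKronecker (k : ℕ) {R I : Fin N → ℕ} (A : (j : Fin N) → Fin (R j) → Fin (I j) → ℝ) :
    Matrix (Row N k I) (Row N k R) ℝ :=
  fun x a => ∏ j : {j : Fin N // j.1 < k}, A j (a j) (x j)

def colKronecker (k : ℕ) {R I : Fin N → ℕ} (A : (j : Fin N) → Fin (R j) → Fin (I j) → ℝ) :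
    Matrix (Col N k R) (Col N k I) ℝ :=
  fun b y => ∏ j : {j : Fin N // ¬ j.1 < k}, A j (b j) (y j)

theorem unfold_tucker (k : ℕ) {R I : Fin N → ℕ} (H : Tensor R)
    (A : (j : Fin N) → Fin (R j) → Fin (I j) → ℝ) :
    unfold k (tucker H A) = rowKronecker k A * unfold k H * colKronecker k A := by
  ext x y
  simp only [Matrix.mul_apply, Finset.sum_mul, unfold_apply, tucker, rowKronecker, colKronecker]
  rw [← (splitIndex k R).symm.sum_comp, Fintype.sum_prod_type, Finset.sum_comm]
  refine Finset.sum_congr rfl fun b _ => Finset.sum_congr rfl fun a _ => ?_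
  rw [prod_splitIndex_symm]
  ring

theorem rank_unfold_le (k : ℕ) {I : Fin N → ℕ} (H : Tensor I) :
    (unfold k H).rank ≤
      min (∏ i : {j : Fin N // j.1 < k}, I i) (∏ i : {j : Fin N // ¬ j.1 < k}, I i) := by
  have h := le_min (unfold k H).rank_le_card_height (unfold k H).rank_le_card_width
  simpa only [Fintype.card_pi, Fintype.card_fin] using h

theorem rank_unfold_tucker_le (k : ℕ) {R I : Fin N → ℕ} (H : Tensor R)
    (A : (j : Fin N) → Fin (R j) → Fin (I j) → ℝ) :
    (unfold k (tucker H A)).rank ≤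
      min (∏ i : {j : Fin N // j.1 < k}, R i) (∏ i : {j : Fin N // ¬ j.1 < k}, R i) := by
  rw [unfold_tucker]
  calc _ ≤ (rowKronecker k A * unfold k H).rank := Matrix.rank_mul_le_left _ _
    _ ≤ (unfold k H).rank := Matrix.rank_mul_le_right _ _
    _ ≤ _ := rank_unfold_le k H

end Tucker

theorem tera_rank_bound_general (N k : ℕ)
    (I R : Fin N → ℕ)
    (G : Tensor R)
    (A : (j : Fin N) → Fin (R j) → Fin (I j) → ℝ)
    (d : (j : Fin N) → Fin (R j) → ℝ)
    (ΔW : Tensor I)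
    (hΔW : ∀ idx : (i : Fin N) → Fin (I i),
      ΔW idx = ∑ r : (j : Fin N) → Fin (R j),
        G r * (∏ j, d j (r j)) * ∏ j, A j (r j) (idx j)) :
    (unfold k ΔW).rank ≤
      min (∏ i : {j : Fin N // j.1 < k}, R i.1)
          (∏ i : {j : Fin N // ¬ j.1 < k}, R i.1) := by
  have hTucker : ΔW = tucker (fun r => G r * ∏ j, d j (r j)) A := funext hΔW
  exact hTucker ▸ rank_unfold_tucker_le k _ A

/-- **Theorem 1 (rank bound for TeRA).** For the TeRA weight-update tensor
`Δ𝒲(i₁,…,i_N) = ∑_{r₁,…,r_N} 𝒢(r₁,…,r_N) ∏_j d⁽ʲ⁾(r_j) ∏_j A⁽ʲ⁾(r_j, i_j)`,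
the rank of its `[N;k]`-unfolding is at most
`min (∏_{i=1}^k R_i) (∏_{i=k+1}^N R_i)`. -/
theorem tera_rank_bound (N k : ℕ) (hN : 2 ≤ N) (hk : 1 ≤ k) (hkN : k < N)
    (I R : Fin N → ℕ) (hI : ∀ i, 0 < I i) (hR : ∀ i, 0 < R i)
    (G : Tensor R)
    (A : (j : Fin N) → Fin (R j) → Fin (I j) → ℝ)
    (d : (j : Fin N) → Fin (R j) → ℝ)
    (ΔW : Tensor I)
    (hΔW : ∀ idx : (i : Fin N) → Fin (I i),
      ΔW idx = ∑ r : (j : Fin N) → Fin (R j),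
        G r * (∏ j, d j (r j)) * ∏ j, A j (r j) (idx j)) :
    (unfold k ΔW).rank ≤
      min (∏ i : {j : Fin N // j.1 < k}, R i.1)
          (∏ i : {j : Fin N // ¬ j.1 < k}, R i.1) :=
  tera_rank_bound_general N k I R G A d ΔW hΔW
end

section
/- Let N ≥ 2 and 1 ≤ k < N, let I₁,…,I_N and R₁,…,R_N be positive integers, let 𝒢 ∈ ℝ^{R₁×⋯×R_N}, A^(j) ∈ ℝ^{R_j×I_j}, and d^(j) ∈ ℝ^{R_j} for j = 1,…,N, and define the TeRA update Δ𝒲 ∈ ℝ^{I₁×⋯×I_N} by Δ𝒲(i₁,…,i_N) = ∑_{r₁,…,r_N} 𝒢(r₁,…,r_N) ∏_{j=1}^N d^(j)(r_j) ∏_{j=1}^N A^(j)(r_j, i_j). Let L be the matrix with entry ∏_{j=1}^k A^(j)(r_j, i_j) at row (r₁,…,r_k) and column (i₁,…,i_k), let M be the matrix with entry ∏_{j=k+1}^N A^(j)(r_j, i_j) at row (r_{k+1},…,r_N) and column (i_{k+1},…,i_N), let D₁ be the diagonal matrix indexed by (r₁,…,r_k) with diagonal entries ∏_{j=1}^k d^(j)(r_j),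 and let D₂ be the diagonal matrix indexed by (r_{k+1},…,r_N) with diagonal entries ∏_{j=k+1}^N d^(j)(r_j). Then Δ𝐖_{[N;k]} = Lᵀ · D₁ · 𝐆_{[N;k]} · D₂ · M. -/
/-! Splitting a multi-index `(r₁, …, r_N)` into its head `(r₁, …, r_k)` and tail
`(r_{k+1}, …, r_N)` turns the sum defining `Δ𝒲` into a double sum over the row and column
indices of `𝐆_{[N;k]}`, and each product over `j` into a head factor times a tail factor;
the result is the entry formula of `Lᵀ · D₁ · 𝐆_{[N;k]} · D₂ · M`. -/

open Matrix

section PiSplit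

variable {ι : Type*} (p : ι → Prop) [DecidablePred p]

theorem piEquivPiSubtypeProd_symm_apply_of_pos {ρ : ι → Type*} (s : ∀ i : {i // p i}, ρ i)
    (t : ∀ i : {i // ¬p i}, ρ i) (i : {i // p i}) :
    (Equiv.piEquivPiSubtypeProd p ρ).symm (s, t) i = s i :=
  dif_pos i.2

theorem piEquivPiSubtypeProd_symm_apply_of_neg {ρ : ι → Type*} (s : ∀ i : {i // p i}, ρ i)
    (t : ∀ i : {i // ¬p i}, ρ i) (i : {i // ¬p i}) :
    (Equiv.piEquivPiSubtypeProd p ρ).symm (s, t) i = t i :=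
  dif_neg i.2

variable [Fintype ι]

theorem sum_pi_eq_sum_sum_piEquivPiSubtypeProd_symm {ρ : ι → Type*} [∀ i, Fintype (ρ i)]
    [DecidableEq ι] {M : Type*} [AddCommMonoid M] (F : (∀ i, ρ i) → M) :
    ∑ x, F x = ∑ s, ∑ t, F ((Equiv.piEquivPiSubtypeProd p ρ).symm (s, t)) := by
  rw [← (Equiv.piEquivPiSubtypeProd p ρ).symm.sum_comp, Fintype.sum_prod_type]

theorem prod_piEquivPiSubtypeProd_symm {ρ β : ι → Type*} {M : Type*} [CommMonoid M]
    (f : ∀ i, ρ i → β i → M) (s : ∀ i : {i // p i}, ρ i) (t : ∀ i : {i // ¬p i}, ρ i)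
    (r : ∀ i : {i // p i}, β i) (c : ∀ i : {i // ¬p i}, β i) :
    ∏ i, f i ((Equiv.piEquivPiSubtypeProd p ρ).symm (s, t) i)
        ((Equiv.piEquivPiSubtypeProd p β).symm (r, c) i) =
      (∏ i : {i // p i}, f i (s i) (r i)) * ∏ i : {i // ¬p i}, f i (t i) (c i) := by
  rw [← Fintype.prod_subtype_mul_prod_subtype p]
  simp only [piEquivPiSubtypeProd_symm_apply_of_pos, piEquivPiSubtypeProd_symm_apply_of_neg]

end PiSplit

theorem Matrix.transpose_mul_diagonal_mul_mul_diagonal_mul_apply {l m n o α : Type*}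
    [Fintype m] [Fintype n] [DecidableEq m] [DecidableEq n] [CommSemiring α]
    (L : Matrix m l α) (a : m → α) (X : Matrix m n α) (b : n → α) (M : Matrix n o α)
    (i : l) (j : o) :
    (Lᵀ * diagonal a * X * diagonal b * M) i j =
      ∑ s, ∑ t, L s i * a s * X s t * b t * M t j := by
  simp only [mul_apply, transpose_apply, diagonal_apply, mul_ite, mul_zero, Finset.sum_ite_eq',
    Finset.mem_univ, if_true, Finset.sum_mul]
  exact Finset.sum_comm

theorem unfold_apply_s4 {N k : ℕ} {I : Fin N → ℕ} (A : Tensor I) (r : Row N k I) (c : Col N k I) :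
    unfold k A r c = A ((Equiv.piEquivPiSubtypeProd (fun j : Fin N => j.1 < k) _).symm (r, c)) :=
  rfl

theorem tera_unfolding_factorization_general (N k : ℕ)
    (I R : Fin N → ℕ)
    (G : Tensor R)
    (A : (j : Fin N) → Fin (R j) → Fin (I j) → ℝ)
    (d : (j : Fin N) → Fin (R j) → ℝ)
    (ΔW : Tensor I)
    (hΔW : ∀ idx : (i : Fin N) → Fin (I i),
      ΔW idx = ∑ r : (j : Fin N) → Fin (R j),
        G r * (∏ j, d j (r j)) * ∏ j, A j (r j) (idx j))
    (L : Matrix (Row N k R) (Row N k I) ℝ)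
    (hL : ∀ (r : Row N k R) (i : Row N k I),
      L r i = ∏ j : {l : Fin N // l.1 < k}, A j.1 (r j) (i j))
    (M : Matrix (Col N k R) (Col N k I) ℝ)
    (hM : ∀ (r : Col N k R) (c : Col N k I),
      M r c = ∏ j : {l : Fin N // ¬ l.1 < k}, A j.1 (r j) (c j))
    (D₁ : Matrix (Row N k R) (Row N k R) ℝ)
    (hD₁ : D₁ = Matrix.diagonal fun r : Row N k R =>
      ∏ j : {l : Fin N // l.1 < k}, d j.1 (r j))
    (D₂ : Matrix (Col N k R) (Col N k R) ℝ)
    (hD₂ : D₂ = Matrix.diagonal fun r : Col N k R =>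
      ∏ j : {l : Fin N // ¬ l.1 < k}, d j.1 (r j)) :
    unfold k ΔW = Lᵀ * D₁ * unfold k G * D₂ * M := by
  subst hD₁ hD₂
  ext r c
  rw [transpose_mul_diagonal_mul_mul_diagonal_mul_apply, unfold_apply_s4, hΔW,
    sum_pi_eq_sum_sum_piEquivPiSubtypeProd_symm (fun j : Fin N => j.1 < k)]
  refine Finset.sum_congr rfl fun s _ => Finset.sum_congr rfl fun t _ => ?_
  rw [mul_assoc, ← Finset.prod_mul_distrib,
    prod_piEquivPiSubtypeProd_symm _ (fun j x y => d j x * A j x y),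
    Finset.prod_mul_distrib, Finset.prod_mul_distrib, hL, hM, unfold_apply_s4]
  ring

/-- **Unfolding of the TeRA update.** For the TeRA update
`Δ𝒲(i₁,…,i_N) = ∑_{r₁,…,r_N} 𝒢(r₁,…,r_N) ∏_j d⁽ʲ⁾(r_j) ∏_j A⁽ʲ⁾(r_j, i_j)`,
the `[N;k]`-unfolding factorizes as `Δ𝐖_{[N;k]} = Lᵀ · D₁ · 𝐆_{[N;k]} · D₂ · M`,
where `L`, `M` are the Kronecker-product factor matrices and `D₁`, `D₂` are the
diagonal matrices built from the scaling vectors `d⁽ʲ⁾`. -/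
theorem tera_unfolding_factorization (N k : ℕ) (hN : 2 ≤ N) (hk : 1 ≤ k) (hkN : k < N)
    (I R : Fin N → ℕ) (hI : ∀ i, 0 < I i) (hR : ∀ i, 0 < R i)
    (G : Tensor R)
    (A : (j : Fin N) → Fin (R j) → Fin (I j) → ℝ)
    (d : (j : Fin N) → Fin (R j) → ℝ)
    (ΔW : Tensor I)
    (hΔW : ∀ idx : (i : Fin N) → Fin (I i),
      ΔW idx = ∑ r : (j : Fin N) → Fin (R j),
        G r * (∏ j, d j (r j)) * ∏ j, A j (r j) (idx j))
    (L : Matrix (Row N k R) (Row N k I) ℝ)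
    (hL : ∀ (r : Row N k R) (i : Row N k I),
      L r i = ∏ j : {l : Fin N // l.1 < k}, A j.1 (r j) (i j))
    (M : Matrix (Col N k R) (Col N k I) ℝ)
    (hM : ∀ (r : Col N k R) (c : Col N k I),
      M r c = ∏ j : {l : Fin N // ¬ l.1 < k}, A j.1 (r j) (c j))
    (D₁ : Matrix (Row N k R) (Row N k R) ℝ)
    (hD₁ : D₁ = Matrix.diagonal fun r : Row N k R =>
      ∏ j : {l : Fin N // l.1 < k}, d j.1 (r j))
    (D₂ : Matrix (Col N k R) (Col N k R) ℝ)
    (hD₂ : D₂ = Matrix.diagonal fun r : Col N k R =>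
      ∏ j : {l : Fin N // ¬ l.1 < k}, d j.1 (r j)) :
    unfold k ΔW = Lᵀ * D₁ * unfold k G * D₂ * M :=
  tera_unfolding_factorization_general N k I R G A d ΔW hΔW L hL M hM D₁ hD₁ D₂ hD₂
end
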